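/- Let Q be a left quasigroup connected by Dis(Q) (i.e. Dis(Q) acts transitively), let α be a central congruence of Q, and let β = O_{Dis_α}. Then for every x ∈ Q: Dis(Q)_{[x]_β} ≅ Dis_α × Dis(Q)_x and Dis^β ≅ Dis_α × Dis^β_x; moreover Dis^β embeds into a direct power of Dis_α and hence is abelian. -/

import Mathlib

/-! Basic theory of left quasigroups, following the paper. -/

structure LeftQuasigroup (Q : Type*) where
  op : Q → Q → Q
  ld : Q → Q → Q
  op_ld : ∀ x y, op x (ld x y) = y
  ld_op : ∀ x y, ld x (op x y) = y

/-- Orbit relation of a subgroup of permutations. -/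
def orbRel {Q : Type*} (N : Subgroup (Equiv.Perm Q)) (x y : Q) : Prop := ∃ h ∈ N, h y = x

/-- Orbit equivalence relation of a subgroup of permutations. -/
def orbSetoid {Q : Type*} (N : Subgroup (Equiv.Perm Q)) : Setoid Q where
  r := orbRel N
  iseqv := by
    constructor
    · exact fun x => ⟨1, N.one_mem, rfl⟩
    · rintro x y ⟨h, hN, rfl⟩
      exact ⟨h⁻¹, N.inv_mem hN, h.symm_apply_apply y⟩
    · rintro x y z ⟨h, hN, rfl⟩ ⟨g, gN, rfl⟩
      exact ⟨h * g, N.mul_mem hN gN, rfl⟩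

/-- The subgroup of permutations moving every point inside its `α`-class. -/
def kerRel {Q : Type*} (α : Setoid Q) : Subgroup (Equiv.Perm Q) where
  carrier := {g | ∀ x, α.r (g x) x}
  one_mem' := fun x => α.refl x
  mul_mem' := by
    intro a b ha hb x
    exact α.trans (ha (b x)) (hb x)
  inv_mem' := by
    intro a ha x
    have := ha (a⁻¹ x)
    rw [show a (a⁻¹ x) = x from a.apply_symm_apply x] at this
    exact α.symm this

/-- Pointwise stabilizer of `x` in `N`. -/
def pstab {Q : Type*} (N : Subgroup (Equiv.Perm Q)) (x : Q) : Subgroup (Equiv.Perm Q) :=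
  N ⊓ MulAction.stabilizer (Equiv.Perm Q) x

/-- Meet of a family of setoids. -/
def infSetoid {Q I : Type*} (α : I → Setoid Q) : Setoid Q where
  r x y := ∀ i, (α i).r x y
  iseqv := ⟨fun x i => (α i).refl x, fun h i => (α i).symm (h i),
    fun h g i => (α i).trans (h i) (g i)⟩

namespace LeftQuasigroup

variable {Q : Type*} (S : LeftQuasigroup Q)

/-- Left translation as a permutation. -/
def L (x : Q) : Equiv.Perm Q := ⟨S.op x, S.ld x, S.ld_op x, S.op_ld x⟩

/-- The left multiplication group. -/
def LMlt : Subgroup (Equiv.Perm Q) := Subgroup.closure (Set.range S.L)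

/-- The displacement group relative to a binary relation `r`. -/
def disRel (r : Q → Q → Prop) : Subgroup (Equiv.Perm Q) :=
  Subgroup.closure {g | ∃ h ∈ S.LMlt, ∃ x y, r x y ∧ g = h * (S.L x * (S.L y)⁻¹) * h⁻¹}

/-- The displacement group. -/
def Dis : Subgroup (Equiv.Perm Q) := S.disRel fun _ _ => True

/-- `Dis^α`. -/
def disUp (α : Setoid Q) : Subgroup (Equiv.Perm Q) := S.Dis ⊓ kerRel α

/-- `LMlt^α`, the kernel of `π_α`. -/
def lmltKer (α : Setoid Q) : Subgroup (Equiv.Perm Q) := S.LMlt ⊓ kerRel α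

/-- Congruences of a left quasigroup. -/
structure IsCongruence (α : Setoid Q) : Prop where
  op_compat : ∀ {x y z w : Q}, α.r x y → α.r z w → α.r (S.op x z) (S.op y w)
  ld_compat : ∀ {x y z w : Q}, α.r x y → α.r z w → α.r (S.ld x z) (S.ld y w)

theorem L_mem_lmlt (x : Q) : S.L x ∈ S.LMlt := Subgroup.subset_closure ⟨x, rfl⟩

theorem disRel_le_lmlt (r : Q → Q → Prop) : S.disRel r ≤ S.LMlt := by
  refine (Subgroup.closure_le _).2 ?_
  rintro g ⟨h, hh, x, y, _, rfl⟩
  exact mul_mem (mul_mem hh (mul_mem (S.L_mem_lmlt x) (inv_mem (S.L_mem_lmlt y)))) (inv_mem hh)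

theorem lmlt_maps {α : Setoid Q} (hα : S.IsCongruence α) {g : Equiv.Perm Q}
    (hg : g ∈ S.LMlt) : ∀ x y, α.r x y → α.r (g x) (g y) := by
  have H : ∀ g ∈ S.LMlt,
      (∀ x y, α.r x y → α.r (g x) (g y)) ∧ (∀ x y, α.r x y → α.r (g⁻¹ x) (g⁻¹ y)) := by
    intro g hg
    induction hg using Subgroup.closure_induction with
    | mem g hgen =>
      obtain ⟨z, rfl⟩ := hgen
      constructor
      · intro x y h; exact hα.op_compat (α.refl z) h
      · intro x y h; exact hα.ld_compat (α.refl z) h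
    | one =>
      constructor <;> intro x y h <;> simpa using h
    | mul a b _ _ ha hb =>
      constructor
      · intro x y h
        exact ha.1 _ _ (hb.1 _ _ h)
      · intro x y h
        have := hb.2 _ _ (ha.2 _ _ h)
        simpa [mul_inv_rev] using this
    | inv a _ ha =>
      refine ⟨ha.2, ?_⟩
      intro x y h
      simpa using ha.1 x y h
  exact (H g hg).1

/-- The blockwise stabilizer `Dis(Q)_{[x]_α}`. -/
def blockStab (α : Setoid Q) (hα : S.IsCongruence α) (x : Q) : Subgroup (Equiv.Perm Q) where
  carrier := {g | g ∈ S.Dis ∧ α.r (g x) x}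
  one_mem' := ⟨S.Dis.one_mem, α.refl x⟩
  mul_mem' := by
    intro a b ha hb
    refine ⟨S.Dis.mul_mem ha.1 hb.1, ?_⟩
    exact α.trans (S.lmlt_maps hα (S.disRel_le_lmlt _ ha.1) _ _ hb.2) ha.2
  inv_mem' := by
    intro a ha
    refine ⟨S.Dis.inv_mem ha.1, ?_⟩
    have h2 := S.lmlt_maps hα (inv_mem (S.disRel_le_lmlt _ ha.1)) _ _ ha.2
    rw [show a⁻¹ (a x) = x from a.symm_apply_apply x] at h2
    exact α.symm h2

/-- The admissible subgroups `Norm(Q)`. -/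
def Norm : Set (Subgroup (Equiv.Perm Q)) :=
  {N | N ≤ S.LMlt ∧ (∀ h ∈ S.LMlt, ∀ n ∈ N, h * n * h⁻¹ ∈ N) ∧ S.disRel (orbRel N) ≤ N}

/-- Image of a subgroup along the canonical projection `π_α`. -/
def piSub (α : Setoid Q) (N : Subgroup (Equiv.Perm Q)) : Subgroup (Equiv.Perm (Quotient α)) where
  carrier := {k | ∃ h ∈ N, ∀ x : Q, k (Quotient.mk α x) = Quotient.mk α (h x)}
  one_mem' := ⟨1, N.one_mem, fun _ => rfl⟩
  mul_mem' := by
    rintro a b ⟨ha, haN, hae⟩ ⟨hb, hbN, hbe⟩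
    refine ⟨ha * hb, N.mul_mem haN hbN, fun x => ?_⟩
    show a (b (Quotient.mk α x)) = _
    rw [hbe, hae]; rfl
  inv_mem' := by
    rintro a ⟨h, hN, he⟩
    refine ⟨h⁻¹, N.inv_mem hN, fun x => ?_⟩
    have h1 := he (h⁻¹ x)
    rw [show h (h⁻¹ x) = x from h.apply_symm_apply x] at h1
    rw [← h1]; exact Equiv.symm_apply_apply _ _

/-- Preimage of a subgroup along the canonical projection `π_α`. -/
def piPre (α : Setoid Q) (K : Subgroup (Equiv.Perm (Quotient α))) : Subgroup (Equiv.Perm Q) where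
  carrier := {h | h ∈ S.LMlt ∧ ∃ k ∈ K, ∀ x : Q, k (Quotient.mk α x) = Quotient.mk α (h x)}
  one_mem' := ⟨S.LMlt.one_mem, 1, K.one_mem, fun _ => rfl⟩
  mul_mem' := by
    rintro a b ⟨haL, ka, kaK, hae⟩ ⟨hbL, kb, kbK, hbe⟩
    refine ⟨S.LMlt.mul_mem haL hbL, ka * kb, K.mul_mem kaK kbK, fun x => ?_⟩
    show ka (kb (Quotient.mk α x)) = _
    rw [hbe, hae]; rfl
  inv_mem' := by
    rintro a ⟨haL, k, kK, he⟩
    refine ⟨S.LMlt.inv_mem haL, k⁻¹, K.inv_mem kK, fun x => ?_⟩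
    have h1 := he (a⁻¹ x)
    rw [show a (a⁻¹ x) = x from a.apply_symm_apply x] at h1
    rw [← h1]; exact Equiv.symm_apply_apply _ _

/-- Quotient left quasigroup. -/
def quotLQ (α : Setoid Q) (hα : S.IsCongruence α) : LeftQuasigroup (Quotient α) where
  op := Quotient.lift₂ (fun x y => Quotient.mk α (S.op x y))
    (fun _ _ _ _ h1 h2 => Quotient.sound (hα.op_compat h1 h2))
  ld := Quotient.lift₂ (fun x y => Quotient.mk α (S.ld x y))
    (fun _ _ _ _ h1 h2 => Quotient.sound (hα.ld_compat h1 h2))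
  op_ld := fun a b => Quotient.inductionOn₂ a b fun x y => congrArg (Quotient.mk α) (S.op_ld x y)
  ld_op := fun a b => Quotient.inductionOn₂ a b fun x y => congrArg (Quotient.mk α) (S.ld_op x y)

/-- Idempotent left quasigroup. -/
def Idem : Prop := ∀ x : Q, S.op x x = x

/-- Left distributive law (defining quandles among idempotent left quasigroups). -/
def Ldist : Prop := ∀ x y z : Q, S.op x (S.op y z) = S.op (S.op x y) (S.op x z)

/-- A left quasigroup is faithful if the Cayley kernel is trivial. -/
def Faithful : Prop := ∀ x y : Q, (∀ z, S.op x z = S.op y z) → x = y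

/-- Connected: `LMlt` acts transitively. -/
def Connected : Prop := ∀ x y : Q, ∃ h ∈ S.LMlt, h y = x

/-- Semiregular: `Dis` acts with trivial stabilizers. -/
def Semiregular : Prop := ∀ g ∈ S.Dis, ∀ x : Q, g x = x → g = 1

/-- Subalgebras. -/
def IsSubalgebra (A : Set Q) : Prop :=
  ∀ ⦃x⦄, x ∈ A → ∀ ⦃y⦄, y ∈ A → S.op x y ∈ A ∧ S.ld x y ∈ A

/-- The left quasigroup structure on a subalgebra. -/
def subLQ (A : Set Q) (hA : S.IsSubalgebra A) : LeftQuasigroup A where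
  op a b := ⟨S.op a b, (hA a.2 b.2).1⟩
  ld a b := ⟨S.ld a b, (hA a.2 b.2).2⟩
  op_ld a b := Subtype.ext (S.op_ld a b)
  ld_op a b := Subtype.ext (S.ld_op a b)

/-- Superconnected: every subalgebra is connected. -/
def Superconnected : Prop := ∀ (A : Set Q) (hA : S.IsSubalgebra A), (S.subLQ A hA).Connected

/-- Superfaithful: every subalgebra is faithful. -/
def Superfaithful : Prop := ∀ (A : Set Q) (hA : S.IsSubalgebra A), (S.subLQ A hA).Faithful

theorem infCong {I : Type*} {α : I → Setoid Q} (hc : ∀ i, S.IsCongruence (α i)) :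
    S.IsCongruence (infSetoid α) :=
  ⟨fun h1 h2 i => (hc i).op_compat (h1 i) (h2 i),
   fun h1 h2 i => (hc i).ld_compat (h1 i) (h2 i)⟩

end LeftQuasigroup

/-- Terms in the language of left quasigroups in `n` variables. -/
inductive LQTerm : ℕ → Type
  | var : ∀ {n}, Fin n → LQTerm n
  | op : ∀ {n}, LQTerm n → LQTerm n → LQTerm n
  | ld : ∀ {n}, LQTerm n → LQTerm n → LQTerm n

/-- Evaluation of terms. -/
def evalT {Q : Type*} (S : LeftQuasigroup Q) : ∀ {n}, LQTerm n → (Fin n → Q) → Q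
  | _, .var i, v => v i
  | _, .op t s, v => S.op (evalT S t v) (evalT S s v)
  | _, .ld t s, v => S.ld (evalT S t v) (evalT S s v)

/-- The centralizing relation `C(a, b; d)` of commutator theory. -/
def CC {Q : Type*} (S : LeftQuasigroup Q) (a b d : Q → Q → Prop) : Prop :=
  ∀ (n : ℕ) (t : LQTerm (n + 1)) (x y : Q) (z u : Fin n → Q),
    a x y → (∀ i, b (z i) (u i)) →
    d (evalT S t (Fin.cons x z)) (evalT S t (Fin.cons x u)) →
    d (evalT S t (Fin.cons y z)) (evalT S t (Fin.cons y u))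

/-- Nilpotency of length `n` in the sense of commutator theory: the ascending central
series (characterized congruence by congruence) reaches the full congruence at step `n`. -/
def LeftQuasigroup.NilpotentLength {Q : Type*} (S : LeftQuasigroup Q) (n : ℕ) : Prop :=
  ∃ c : ℕ → Setoid Q,
    (∀ k, S.IsCongruence (c k)) ∧
    (∀ x y : Q, (c 0).r x y ↔ x = y) ∧
    (∀ k, ∀ β : Setoid Q, S.IsCongruence β →
      (CC S β.r (fun _ _ => True) (c k).r ↔ β ≤ c (k + 1))) ∧
    (∀ x y : Q, (c n).r x y)

/-! Centrality of `α` is a term condition, and every element of `LMlt(Q)` acts as a term with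
parameters. Applied to the term `c \ h(x · (a \ h⁻¹(c · z)))`, which equals `z` at `x = a`, it
shows that `L_c⁻¹ g L_c` does not depend on `c` for the generators `g = h L_b L_a⁻¹ h⁻¹` of
`Dis_α`; hence `Dis_α` centralizes `Dis(Q)`. A central subgroup of a transitive group is
semiregular, so for any `H ≤ Dis(Q)` containing `Dis_α` whose elements keep `x` in its
`Dis_α`-orbit, `H` is the internal direct product `Dis_α × H_x`. Evaluating the `Dis_α`-component
of `g ∈ Dis^β` at one point of each block determines `g` on the whole block, which embeds
`Dis^β` into `Dis_α ^ (Q/β)`, an abelian group. -/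

open Equiv Subgroup

noncomputable def Subgroup.prodMulEquivOfCommute {G : Type*} [Group G] {H N K : Subgroup G}
    (hN : N ≤ H) (hK : K ≤ H) (hcomm : ∀ n ∈ N, ∀ k ∈ K, Commute n k) (hdisj : Disjoint N K)
    (hprod : ∀ h ∈ H, ∃ n ∈ N, ∃ k ∈ K, n * k = h) : N × K ≃* H :=
  MulEquiv.ofBijective
    ((inclusion hN).noncommCoprod (inclusion hK) fun n k => Subtype.ext (hcomm n n.2 k k.2).eq)
    ⟨(injective_iff_map_eq_one _).2 fun ⟨n, k⟩ he => by
      have he : (n : G) * k = 1 := congrArg Subtype.val he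
      have hn : (n : G) = 1 := disjoint_def.1 hdisj n.2 (eq_inv_of_mul_eq_one_left he ▸ inv_mem k.2)
      rw [hn, one_mul] at he
      exact Prod.ext (Subtype.ext hn) (Subtype.ext he),
     fun ⟨h, hh⟩ => by
      obtain ⟨n, hn, k, hk, rfl⟩ := hprod h hh
      exact ⟨(⟨n, hn⟩, ⟨k, hk⟩), rfl⟩⟩

theorem Subgroup.commute_of_injective_pi {G M ι : Type*} [Group G] [Group M] {H : Subgroup G}
    {N : Subgroup M} (hN : N ≤ centralizer N) (f : H →* (ι → N)) (hf : Function.Injective f)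
    {g h : G} (hg : g ∈ H) (hh : h ∈ H) : Commute g h := by
  have hfcomm : Commute (f ⟨g, hg⟩) (f ⟨h, hh⟩) := funext fun i =>
    Subtype.ext (mem_centralizer_iff.1 (hN (f ⟨h, hh⟩ i).2) _ (f ⟨g, hg⟩ i).2)
  exact congrArg Subtype.val (Commute.of_map hf hfcomm)

section PermGroup

variable {Q : Type*} {G H N : Subgroup (Perm Q)}

theorem eq_one_of_mem_centralizer_of_apply_eq_self (htrans : ∀ x y : Q, ∃ g ∈ G, g y = x)
    {n : Perm Q} (hn : n ∈ centralizer G) {x : Q} (hx : n x = x) : n = 1 := by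
  ext y
  obtain ⟨g, hg, rfl⟩ := htrans y x
  have hcomm : g * n = n * g := mem_centralizer_iff.1 hn g hg
  simpa [hx] using congrArg (· x) hcomm.symm

theorem apply_eq_of_orbRel {g g' : Perm Q} (hg : g ∈ centralizer N) (hg' : g' ∈ centralizer N)
    {x y : Q} (hy : orbRel N y x) (hx : g x = g' x) : g y = g' y := by
  obtain ⟨m, hm, rfl⟩ := hy
  calc g (m x) = m (g x) := congrArg (· x) (mem_centralizer_iff.1 hg m hm).symm
    _ = m (g' x) := by rw [hx]
    _ = g' (m x) := congrArg (· x) (mem_centralizer_iff.1 hg' m hm)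

theorem mem_pstab_iff {g : Perm Q} {x : Q} : g ∈ pstab H x ↔ g ∈ H ∧ g x = x :=
  mem_inf

noncomputable def prodPstabMulEquiv (x : Q) (hNH : N ≤ H) (hcomm : N ≤ centralizer H)
    (hfree : ∀ n ∈ N, n x = x → n = 1) (horb : ∀ h ∈ H, orbRel N (h x) x) :
    N × pstab H x ≃* H :=
  prodMulEquivOfCommute hNH inf_le_left
    (fun _ hn k hk => (mem_centralizer_iff.1 (hcomm hn) k (mem_pstab_iff.1 hk).1).symm)
    (disjoint_def.2 fun hn hk => hfree _ hn (mem_pstab_iff.1 hk).2)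
    fun h hh => by
      obtain ⟨n, hn, hnx⟩ := horb h hh
      refine ⟨n, hn, n⁻¹ * h, mem_pstab_iff.2 ⟨mul_mem (inv_mem (hNH hn)) hh, ?_⟩,
        mul_inv_cancel_left n h⟩
      rw [Perm.mul_apply, ← hnx]
      exact n.symm_apply_apply x

theorem prodPstabMulEquiv_symm_fst_apply (x : Q) (hNH : N ≤ H) (hcomm : N ≤ centralizer H)
    (hfree : ∀ n ∈ N, n x = x → n = 1) (horb : ∀ h ∈ H, orbRel N (h x) x) (h : H) :
    (((prodPstabMulEquiv x hNH hcomm hfree horb).symm h).1 : Perm Q) x = (h : Perm Q) x := by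
  set p := (prodPstabMulEquiv x hNH hcomm hfree horb).symm h
  have hp : (p.1 : Perm Q) * p.2 = h :=
    congrArg Subtype.val ((prodPstabMulEquiv x hNH hcomm hfree horb).apply_symm_apply h)
  rw [← hp, Perm.mul_apply, (mem_pstab_iff.1 p.2.2).2]

theorem exists_injective_monoidHom_pi (hNH : N ≤ H) (hcomm : N ≤ centralizer H)
    (hfree : ∀ n ∈ N, ∀ x, n x = x → n = 1) (horb : ∀ h ∈ H, ∀ x, orbRel N (h x) x) :
    ∃ f : H →* (Quotient (orbSetoid N) → N), Function.Injective f := by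
  let e (x : Q) := prodPstabMulEquiv x hNH hcomm (hfree · · x) (horb · · x)
  refine ⟨MonoidHom.pi fun q => (MonoidHom.fst _ _).comp (e q.out).symm.toMonoidHom,
    fun g g' hgg' => Subtype.ext (Equiv.ext fun y => ?_)⟩
  set r := (Quotient.mk (orbSetoid N) y).out
  have hr : (g : Perm Q) r = (g' : Perm Q) r := by
    have := congrArg (fun f => (f (Quotient.mk _ y) : Perm Q) r) hgg'
    simp only [MonoidHom.pi_apply, MonoidHom.coe_comp, Function.comp_apply,
      MonoidHom.coe_fst, MulEquiv.coe_toMonoidHom] at this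
    rwa [prodPstabMulEquiv_symm_fst_apply, prodPstabMulEquiv_symm_fst_apply] at this
  exact apply_eq_of_orbRel (le_centralizer_iff.1 hcomm g.2) (le_centralizer_iff.1 hcomm g'.2)
    ((orbSetoid N).symm (Quotient.mk_out y)) hr


end PermGroup

namespace LeftQuasigroup

variable {Q : Type*} (S : LeftQuasigroup Q)

@[simp]
theorem L_apply (c z : Q) : S.L c z = S.op c z := rfl

@[simp]
theorem L_inv_apply (c z : Q) : (S.L c)⁻¹ z = S.ld c z := rfl

theorem disRel_le_dis (r : Q → Q → Prop) : S.disRel r ≤ S.Dis :=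
  closure_mono fun _ ⟨h, hh, x, y, _, hg⟩ => ⟨h, hh, x, y, trivial, hg⟩

/-- `h` acts as a term with parameters `c`, which may sit at any positions `ι` of the context. -/
def IsPolynomialPerm (h : Perm Q) : Prop :=
  ∃ (n : ℕ) (c : Fin n → Q), ∀ {m : ℕ} (s : LQTerm m) (ι : Fin n → Fin m), ∃ t : LQTerm m,
    ∀ v : Fin m → Q, (∀ i, v (ι i) = c i) → evalT S t v = h (evalT S s v)

theorem isPolynomialPerm_of_mem_lmlt {h : Perm Q} (hh : h ∈ S.LMlt) : S.IsPolynomialPerm h := by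
  induction hh using closure_induction'' with
  | mem _ hx =>
    obtain ⟨c, rfl⟩ := hx
    exact ⟨1, ![c], fun s ι => ⟨.op (.var (ι 0)) s, fun v hv => by simp [evalT, hv]⟩⟩
  | inv_mem _ hx =>
    obtain ⟨c, rfl⟩ := hx
    exact ⟨1, ![c], fun s ι => ⟨.ld (.var (ι 0)) s, fun v hv => by simp [evalT, hv]⟩⟩
  | one => exact ⟨0, Fin.elim0, fun s _ => ⟨s, fun _ _ => rfl⟩⟩
  | mul h₁ h₂ _ _ ih₁ ih₂ =>
    obtain ⟨n₁, c₁, ih₁⟩ := ih₁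
    obtain ⟨n₂, c₂, ih₂⟩ := ih₂
    refine ⟨n₁ + n₂, Fin.append c₁ c₂, fun s ι => ?_⟩
    obtain ⟨t₂, ht₂⟩ := ih₂ s (ι ∘ Fin.natAdd n₁)
    obtain ⟨t₁, ht₁⟩ := ih₁ t₂ (ι ∘ Fin.castAdd n₂)
    refine ⟨t₁, fun v hv => ?_⟩
    rw [ht₁ v fun i => by simp [hv], ht₂ v fun i => by simp [hv]]
    rfl

theorem conj_L_displacement_eq {r : Q → Q → Prop}
    (hc : CC S r (fun _ _ => True) (fun x y => x = y)) {a b : Q} (hab : r a b)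
    {h : Perm Q} (hh : h ∈ S.LMlt) (c c' : Q) :
    (S.L c)⁻¹ * (h * (S.L b * (S.L a)⁻¹) * h⁻¹) * S.L c =
      (S.L c')⁻¹ * (h * (S.L b * (S.L a)⁻¹) * h⁻¹) * S.L c' := by
  obtain ⟨n₁, p₁, hpoly⟩ := S.isPolynomialPerm_of_mem_lmlt hh
  obtain ⟨n₂, p₂, hpoly_inv⟩ := S.isPolynomialPerm_of_mem_lmlt (inv_mem hh)
  -- variables: `x, c, z, a`, then the parameters of `h` and of `h⁻¹`
  let V : Q → Q → Q → Fin (n₁ + n₂ + 3 + 1) → Q := fun x c z =>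
    Fin.cons x (Fin.cons c (Fin.cons z (Fin.cons a (Fin.append p₁ p₂))))
  obtain ⟨t₁, ht₁⟩ := hpoly_inv (.op (.var (Fin.succ 0)) (.var (Fin.succ (Fin.succ 0))))
    fun i => (Fin.natAdd n₁ i).succ.succ.succ.succ
  obtain ⟨t₂, ht₂⟩ := hpoly (.op (.var 0) (.ld (.var (Fin.succ (Fin.succ (Fin.succ 0)))) t₁))
    fun i => (Fin.castAdd n₂ i).succ.succ.succ.succ
  have heval : ∀ x c z, evalT S (.ld (.var (Fin.succ 0)) t₂) (V x c z) =
      S.ld c (h (S.op x (S.ld a (h⁻¹ (S.op c z))))) := by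
    intro x c z
    simp only [evalT]
    rw [ht₂ _ fun i => by simp [V]]
    simp only [evalT]
    rw [ht₁ _ fun i => by simp [V]]
    simp only [V, evalT, Fin.cons_succ, Fin.cons_zero]
  ext z
  have key : evalT S (.ld (.var (Fin.succ 0)) t₂) (V b c z) =
      evalT S (.ld (.var (Fin.succ 0)) t₂) (V b c' z) :=
    hc _ _ a b _ _ hab (fun _ => trivial) <| show evalT S _ (V a c z) = evalT S _ (V a c' z) by
      rw [heval, heval]
      simp [S.op_ld, S.ld_op]
  simpa only [heval, Perm.mul_apply, L_apply, L_inv_apply] using key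

theorem commute_conj_L_mul_inv {r : Q → Q → Prop}
    (hc : CC S r (fun _ _ => True) (fun x y => x = y)) {a b : Q} (hab : r a b)
    {h : Perm Q} (hh : h ∈ S.LMlt) (c c' : Q) :
    Commute (h * (S.L a * (S.L b)⁻¹) * h⁻¹) (S.L c * (S.L c')⁻¹) := by
  have hconj := S.conj_L_displacement_eq hc hab hh c c'
  set g := h * (S.L b * (S.L a)⁻¹) * h⁻¹ with hg_def
  have hg : Commute g (S.L c * (S.L c')⁻¹) :=
    calc g * (S.L c * (S.L c')⁻¹) = S.L c * ((S.L c)⁻¹ * g * S.L c) * (S.L c')⁻¹ := by group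
      _ = S.L c * ((S.L c')⁻¹ * g * S.L c') * (S.L c')⁻¹ := by rw [hconj]
      _ = S.L c * (S.L c')⁻¹ * g := by group
  have hinv : h * (S.L a * (S.L b)⁻¹) * h⁻¹ = g⁻¹ := by
    rw [hg_def]
    group
  exact hinv ▸ hg.inv_left

theorem disRel_le_centralizer_dis {r : Q → Q → Prop}
    (hc : CC S r (fun _ _ => True) (fun x y => x = y)) :
    S.disRel r ≤ centralizer S.Dis := by
  refine (closure_le _).2 ?_
  rintro _ ⟨k, hk, a, b, hab, rfl⟩
  rw [SetLike.mem_coe, Dis, disRel, centralizer_closure, mem_centralizer_iff]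
  rintro _ ⟨h, hh, x, y, -, rfl⟩
  have hcomm := (S.commute_conj_L_mul_inv hc hab (mul_mem (inv_mem hh) hk) x y).conj h
  convert hcomm.symm.eq using 2 <;> group

theorem pstab_blockStab (α : Setoid Q) (hα : S.IsCongruence α) (x : Q) :
    pstab (S.blockStab α hα x) x = pstab S.Dis x := by
  ext g
  simp only [mem_pstab_iff]
  exact ⟨fun ⟨hg, hgx⟩ => ⟨hg.1, hgx⟩, fun ⟨hg, hgx⟩ => ⟨⟨hg, by rw [hgx]⟩, hgx⟩⟩

end LeftQuasigroup

theorem stmt17_general {Q : Type*} (S : LeftQuasigroup Q) (α : Setoid Q)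
    (hconn : ∀ x y : Q, ∃ h ∈ S.Dis, h y = x)
    (hc : CC S α.r (fun _ _ => True) (fun x y => x = y))
    (hβ : S.IsCongruence (orbSetoid (S.disRel α.r))) :
    (∀ x : Q, Nonempty
      (↥(S.blockStab (orbSetoid (S.disRel α.r)) hβ x) ≃*
        ↥(S.disRel α.r) × ↥(pstab S.Dis x))) ∧
    (∀ x : Q, Nonempty
      (↥(S.disUp (orbSetoid (S.disRel α.r))) ≃*
        ↥(S.disRel α.r) × ↥(pstab (S.disUp (orbSetoid (S.disRel α.r))) x))) ∧
    (∃ f : ↥(S.disUp (orbSetoid (S.disRel α.r))) →*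
        (Quotient (orbSetoid (S.disRel α.r)) → ↥(S.disRel α.r)),
      Function.Injective f) ∧
    (∀ g ∈ S.disUp (orbSetoid (S.disRel α.r)), ∀ h ∈ S.disUp (orbSetoid (S.disRel α.r)),
      g * h = h * g) := by
  set N := S.disRel α.r
  have hND : N ≤ S.Dis := S.disRel_le_dis α.r
  have hcent : N ≤ centralizer S.Dis := S.disRel_le_centralizer_dis hc
  have hcentH {H : Subgroup (Perm Q)} (hH : H ≤ S.Dis) : N ≤ centralizer H :=
    hcent.trans (centralizer_le hH)
  have hfree : ∀ n ∈ N, ∀ x, n x = x → n = 1 := fun _ hn _ =>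
    eq_one_of_mem_centralizer_of_apply_eq_self hconn (hcent hn)
  have hNup : N ≤ S.disUp (orbSetoid N) := fun n hn => ⟨hND hn, fun _ => ⟨n, hn, rfl⟩⟩
  have horb : ∀ g ∈ S.disUp (orbSetoid N), ∀ x, orbRel N (g x) x := fun _ hg => hg.2
  obtain ⟨f, hf⟩ := exists_injective_monoidHom_pi hNup (hcentH inf_le_left) hfree horb
  refine ⟨fun x => ⟨?_⟩, fun x => ⟨(prodPstabMulEquiv x hNup (hcentH inf_le_left)
    (hfree · · x) (horb · · x)).symm⟩, ⟨f, hf⟩, fun g hg h hh =>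
    (Subgroup.commute_of_injective_pi (hcentH hND) f hf hg hh).eq⟩
  have hNblock : N ≤ S.blockStab (orbSetoid N) hβ x := fun n hn => ⟨hND hn, n, hn, rfl⟩
  exact (prodPstabMulEquiv x hNblock (hcentH fun _ hg => hg.1) (hfree · · x)
    fun _ hg => hg.2).symm.trans
      (MulEquiv.prodCongr (MulEquiv.refl N) (MulEquiv.subgroupCongr (S.pstab_blockStab _ hβ x)))

/-- for `Q` connected by `Dis(Q)`, `α` central, `β = O_{Dis_α}`:
`Dis(Q)_{[x]_β} ≅ Dis_α × Dis(Q)_x`, `Dis^β ≅ Dis_α × Dis^β_x`, and `Dis^β` embeds in a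
direct power of `Dis_α`, hence is abelian. -/
theorem stmt17 {Q : Type*} (S : LeftQuasigroup Q) (α : Setoid Q) (hα : S.IsCongruence α)
    (hconn : ∀ x y : Q, ∃ h ∈ S.Dis, h y = x)
    (hc : CC S α.r (fun _ _ => True) (fun x y => x = y))
    (hβ : S.IsCongruence (orbSetoid (S.disRel α.r))) :
    (∀ x : Q, Nonempty
      (↥(S.blockStab (orbSetoid (S.disRel α.r)) hβ x) ≃*
        ↥(S.disRel α.r) × ↥(pstab S.Dis x))) ∧
    (∀ x : Q, Nonempty
      (↥(S.disUp (orbSetoid (S.disRel α.r))) ≃*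
        ↥(S.disRel α.r) × ↥(pstab (S.disUp (orbSetoid (S.disRel α.r))) x))) ∧
    (∃ f : ↥(S.disUp (orbSetoid (S.disRel α.r))) →*
        (Quotient (orbSetoid (S.disRel α.r)) → ↥(S.disRel α.r)),
      Function.Injective f) ∧
    (∀ g ∈ S.disUp (orbSetoid (S.disRel α.r)), ∀ h ∈ S.disUp (orbSetoid (S.disRel α.r)),
      g * h = h * g) :=
  stmt17_general S α hconn hc hβ
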